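/- Let q₀ ∈ L²(0,π), α ∈ ℝ, k ≥ 1, and suppose μ ∈ ℝ is the k-th eigenvalue of L[q₀] (i.e., L[q₀] admits an eigenfunction with eigenvalue μ, boundary parameter α, and exactly k−1 zeros in (0,π)). Then for every λ ≤ μ, the nonlinear problem (NP_{−1}) (with potential q₀, spectral parameter λ and boundary parameter α) has no nonzero solution having at least k−1 zeros in the open interval (0,π). -/

import Mathlib

open MeasureTheory Set Real

noncomputable section

/-- Lebesgue measure restricted to the open interval (0, π). -/
def μI : Measure ℝ := volume.restrict (Set.Ioo 0 Real.pi)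

/-- `q` belongs to `L²(0,π)`. -/
def MemL2 (q : ℝ → ℝ) : Prop := MemLp q 2 μI

/-- The `L²(0,π)` norm. -/
def l2norm (q : ℝ → ℝ) : ℝ := (eLpNorm q 2 μI).toReal

/-- `u` is `C¹` on `[0,π]` with derivative `u'`, and `u'` is absolutely continuous
with a.e. (integrable) derivative `u''`, expressed via the fundamental theorem of
calculus: `u' x = u' 0 + ∫_0^x u''`. -/
def IsC2AC (u u' u'' : ℝ → ℝ) : Prop :=
  (∀ x ∈ Set.Icc (0:ℝ) Real.pi, HasDerivWithinAt u (u' x) (Set.Icc 0 Real.pi) x) ∧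
  ContinuousOn u' (Set.Icc 0 Real.pi) ∧
  IntervalIntegrable u'' MeasureTheory.volume 0 Real.pi ∧
  (∀ x ∈ Set.Icc (0:ℝ) Real.pi, u' x = u' 0 + ∫ t in (0:ℝ)..x, u'' t)

/-- Separated boundary conditions with boundary parameter `α`. -/
def BC (α : ℝ) (u u' : ℝ → ℝ) : Prop :=
  u 0 * Real.cos α + u' 0 * Real.sin α = 0 ∧
  u Real.pi * Real.cos α + u' Real.pi * Real.sin α = 0

/-- `u` is not identically zero on `[0,π]`. -/
def Nonzero (u : ℝ → ℝ) : Prop := ∃ x ∈ Set.Icc (0:ℝ) Real.pi, u x ≠ 0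

/-- The set of zeros of `u` in the open interval `(0,π)`. -/
def ZeroSet (u : ℝ → ℝ) : Set ℝ := {x ∈ Set.Ioo (0:ℝ) Real.pi | u x = 0}

/-- `u` (with derivative `u'` and a.e. second derivative `u''`) is an eigenfunction of
the Sturm–Liouville operator `L[q]u = -u'' + q u` with eigenvalue `lam` and boundary
parameter `α`. -/
def IsEigenfun (q : ℝ → ℝ) (α lam : ℝ) (u u' u'' : ℝ → ℝ) : Prop :=
  IsC2AC u u' u'' ∧ MemLp u'' 2 μI ∧
  (∀ᵐ x ∂μI, -u'' x + q x * u x = lam * u x) ∧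
  Nonzero u ∧ BC α u u'

/-- `lam` is the `k`-th eigenvalue of `L[q]` (boundary parameter `α`): there is an
eigenfunction with eigenvalue `lam` having exactly `k-1` zeros in `(0,π)`. -/
def HasEigenK (q : ℝ → ℝ) (α lam : ℝ) (k : ℕ) : Prop :=
  ∃ u u' u'', IsEigenfun q α lam u u' u'' ∧
    (ZeroSet u).Finite ∧ (ZeroSet u).ncard = k - 1

/-- The admissible set `A_k(lam)` of potentials `q ∈ L²(0,π)` for which `lam` is the
`k`-th eigenvalue of `L[q]`. -/
def Adm (α lam : ℝ) (k : ℕ) : Set (ℝ → ℝ) := {q | MemL2 q ∧ HasEigenK q α lam k}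

/-- `u` is a solution of the nonlinear problem `(NP_δ)`:
`-u'' + q₀ u = lam u + δ u³` a.e. in `(0,π)` with separated boundary conditions. -/
def IsNPSol (q₀ : ℝ → ℝ) (α lam δ : ℝ) (u u' u'' : ℝ → ℝ) : Prop :=
  IsC2AC u u' u'' ∧
  (∀ᵐ x ∂μI, -u'' x + q₀ x * u x = lam * u x + δ * (u x) ^ 3) ∧
  BC α u u'


/-!
The cubic equation is the linear one `u'' = (q₀ - λ + u²) u`, whose potential exceeds the potential
`q₀ - μ` of the eigenfunction `v` wherever `u ≠ 0`. Sturm comparison then puts a zero of `v`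
strictly between any two consecutive zeros of `u`, the endpoints `0` and `π` counting as zeros
because `u` and `v` satisfy the same boundary condition: on a nodal interval where `u, v > 0` the
Wronskian `u'v - uv'` strictly increases, while the endpoint conditions make it `≥ 0` at the left
end and `≤ 0` at the right end. Hence `v` has more interior zeros than `u`, so at least `k`.
An infinite zero set is excluded as well: an accumulation point of zeros is a common zero of `u`
and `u'`, and uniqueness for the linear equation with integrable coefficient then forces `u ≡ 0`.
-/

open Filter Topology

theorem AbsolutelyContinuousOnInterval.of_eq_add_integral {f g : ℝ → ℝ} {a b : ℝ}
    (hg : IntervalIntegrable g volume a b)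
    (hf : ∀ x ∈ uIcc a b, f x = f a + ∫ t in a..x, g t) :
    AbsolutelyContinuousOnInterval f a b := by
  have hF := hg.absolutelyContinuousOnInterval_intervalIntegral left_mem_uIcc
  refine hF.congr' (eventually_inf_principal.2 (Eventually.of_forall
    fun E hE => Finset.sum_congr rfl fun i hi => ?_))
  rw [hf _ (hE.1 i hi).1, hf _ (hE.1 i hi).2, dist_add_left]

theorem intervalIntegral.integral_pos_of_ae_pos {f : ℝ → ℝ} {a b : ℝ} (hab : a < b)
    (hfi : IntervalIntegrable f volume a b) (hpos : ∀ᵐ x, x ∈ Ioo a b → 0 < f x) :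
    0 < ∫ x in a..b, f x := by
  have hnonneg : 0 ≤ᵐ[volume.restrict (uIoc a b)] f := by
    rw [EventuallyLE, uIoc_of_le hab.le]
    refine ae_restrict_of_ae_eq_of_ae_restrict Ioo_ae_eq_Ioc ?_
    rw [ae_restrict_iff' measurableSet_Ioo]
    filter_upwards [hpos] with x hx hxab using (hx hxab).le
  rw [intervalIntegral.integral_pos_iff_support_of_nonneg_ae' hnonneg hfi]
  refine ⟨hab, (Measure.measure_Ioo_pos _ |>.2 hab).trans_le (measure_mono_ae ?_)⟩
  filter_upwards [hpos] with x hx hxab using ⟨(hx hxab).ne', Ioo_subset_Ioc_self hxab⟩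

theorem ae_mem_Ioo_of_mem_Icc (a b : ℝ) : ∀ᵐ x, x ∈ Icc a b → x ∈ Ioo a b :=
  (Ioo_ae_eq_Icc (μ := volume)).symm.le

namespace IsC2AC

variable {u u' u'' : ℝ → ℝ} {a b x : ℝ}

theorem hasDerivWithinAt (hu : IsC2AC u u' u'') (hx : x ∈ Icc 0 π) :
    HasDerivWithinAt u (u' x) (Icc 0 π) x :=
  hu.1 x hx

theorem continuousOn (hu : IsC2AC u u' u'') : ContinuousOn u (Icc 0 π) :=
  fun _ hx => (hu.hasDerivWithinAt hx).continuousWithinAt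

theorem hasDerivAt (hu : IsC2AC u u' u'') (hx : x ∈ Ioo 0 π) : HasDerivAt u (u' x) x :=
  (hu.hasDerivWithinAt (Ioo_subset_Icc_self hx)).hasDerivAt (Icc_mem_nhds hx.1 hx.2)

theorem intervalIntegrable_deriv (hu : IsC2AC u u' u'') (ha : a ∈ Icc 0 π) (hb : b ∈ Icc 0 π) :
    IntervalIntegrable u' volume a b :=
  (hu.2.1.mono (uIcc_subset_Icc ha hb)).intervalIntegrable

theorem intervalIntegrable_deriv2 (hu : IsC2AC u u' u'') (ha : a ∈ Icc 0 π) (hb : b ∈ Icc 0 π) :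
    IntervalIntegrable u'' volume a b :=
  hu.2.2.1.mono_set (by rw [uIcc_of_le pi_nonneg]; exact uIcc_subset_Icc ha hb)

theorem integral_deriv_eq_sub (hu : IsC2AC u u' u'') (ha : a ∈ Icc 0 π) (hb : b ∈ Icc 0 π) :
    ∫ x in a..b, u' x = u b - u a := by
  refine intervalIntegral.integral_eq_sub_of_hasDeriv_right
    (hu.continuousOn.mono (uIcc_subset_Icc ha hb)) (fun x hx => ?_)
    (hu.intervalIntegrable_deriv ha hb)
  exact (hu.hasDerivAt ⟨(le_min ha.1 hb.1).trans_lt hx.1,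
    hx.2.trans_le (max_le ha.2 hb.2)⟩).hasDerivWithinAt

theorem integral_deriv2_eq_sub (hu : IsC2AC u u' u'') (ha : a ∈ Icc 0 π) (hb : b ∈ Icc 0 π) :
    ∫ x in a..b, u'' x = u' b - u' a := by
  rw [hu.2.2.2 a ha, hu.2.2.2 b hb, ← intervalIntegral.integral_interval_sub_left
    (hu.intervalIntegrable_deriv2 (left_mem_Icc.2 pi_nonneg) hb)
    (hu.intervalIntegrable_deriv2 (left_mem_Icc.2 pi_nonneg) ha)]
  ring

theorem ae_hasDerivAt_deriv (hu : IsC2AC u u' u'') :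
    ∀ᵐ x, x ∈ Ioo 0 π → HasDerivAt u' (u'' x) x := by
  filter_upwards [hu.2.2.1.ae_hasDerivAt_integral] with x hx hx0
  have hF := (hx (uIcc_of_le pi_nonneg ▸ Ioo_subset_Icc_self hx0) 0 left_mem_uIcc).const_add (u' 0)
  refine hF.congr_of_eventuallyEq ?_
  filter_upwards [Icc_mem_nhds hx0.1 hx0.2] with y hy using hu.2.2.2 y hy

theorem absolutelyContinuousOnInterval (hu : IsC2AC u u' u'') :
    AbsolutelyContinuousOnInterval u 0 π :=
  .of_eq_add_integral (hu.intervalIntegrable_deriv (left_mem_Icc.2 pi_nonneg)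
    (right_mem_Icc.2 pi_nonneg)) fun x hx => by
    rw [uIcc_of_le pi_nonneg] at hx
    rw [hu.integral_deriv_eq_sub (left_mem_Icc.2 pi_nonneg) hx]; ring

theorem absolutelyContinuousOnInterval_deriv (hu : IsC2AC u u' u'') :
    AbsolutelyContinuousOnInterval u' 0 π :=
  .of_eq_add_integral hu.2.2.1 fun x hx => hu.2.2.2 x (uIcc_of_le pi_nonneg ▸ hx)

theorem neg (hu : IsC2AC u u' u'') :
    IsC2AC (fun x => -u x) (fun x => -u' x) (fun x => -u'' x) := by
  refine ⟨fun x hx => (hu.hasDerivWithinAt hx).neg, hu.2.1.neg, hu.2.2.1.neg, fun x hx => ?_⟩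
  simp only [intervalIntegral.integral_neg, hu.2.2.2 x hx, neg_add]

variable {v v' v'' : ℝ → ℝ}

theorem wronskian_sub_eq_integral (hu : IsC2AC u u' u'') (hv : IsC2AC v v' v'')
    (ha : a ∈ Icc 0 π) (hb : b ∈ Icc 0 π) :
    (u' b * v b - u b * v' b) - (u' a * v a - u a * v' a) =
      ∫ x in a..b, (u'' x * v x - u x * v'' x) := by
  have hsub : uIcc a b ⊆ uIcc 0 π := uIcc_of_le pi_nonneg ▸ uIcc_subset_Icc ha hb
  have hW : AbsolutelyContinuousOnInterval (fun x => u' x * v x - u x * v' x) a b :=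
    ((hu.absolutelyContinuousOnInterval_deriv.mono hsub).fun_mul
      (hv.absolutelyContinuousOnInterval.mono hsub)).fun_sub
    ((hu.absolutelyContinuousOnInterval.mono hsub).fun_mul
      (hv.absolutelyContinuousOnInterval_deriv.mono hsub))
  rw [← hW.integral_deriv_eq_sub]
  refine intervalIntegral.integral_congr_ae ?_
  filter_upwards [hu.ae_hasDerivAt_deriv, hv.ae_hasDerivAt_deriv, ae_mem_Ioo_of_mem_Icc 0 π]
    with x hu'' hv'' hIoo hxab
  have hx : x ∈ Ioo 0 π := hIoo (uIcc_subset_Icc ha hb (uIoc_subset_uIcc hxab))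
  refine (((hu'' hx).mul (hv.hasDerivAt hx)).sub ((hu.hasDerivAt hx).mul (hv'' hx))).deriv.trans ?_
  ring

end IsC2AC

theorem HasDerivWithinAt.nonneg_of_pos_right {f : ℝ → ℝ} {f' a b : ℝ} {s : Set ℝ}
    (hf : HasDerivWithinAt f f' s a) (hs : Ioo a b ⊆ s) (hab : a < b) (h0 : f a = 0)
    (hpos : ∀ x ∈ Ioo a b, 0 < f x) : 0 ≤ f' := by
  have := left_nhdsWithin_Ioo_neBot hab
  refine ge_of_tendsto ((hasDerivWithinAt_iff_tendsto_slope.1 hf).mono_left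
    (nhdsWithin_mono _ fun x hx => ⟨hs hx, hx.1.ne'⟩)) ?_
  filter_upwards [self_mem_nhdsWithin] with x hx
  rw [slope_def_field, h0, sub_zero]
  exact div_nonneg (hpos x hx).le (sub_nonneg.2 hx.1.le)

theorem HasDerivWithinAt.nonpos_of_pos_left {f : ℝ → ℝ} {f' a b : ℝ} {s : Set ℝ}
    (hf : HasDerivWithinAt f f' s b) (hs : Ioo a b ⊆ s) (hab : a < b) (h0 : f b = 0)
    (hpos : ∀ x ∈ Ioo a b, 0 < f x) : f' ≤ 0 := by
  have := right_nhdsWithin_Ioo_neBot hab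
  refine le_of_tendsto ((hasDerivWithinAt_iff_tendsto_slope.1 hf).mono_left
    (nhdsWithin_mono _ fun x hx => ⟨hs hx, hx.2.ne⟩)) ?_
  filter_upwards [self_mem_nhdsWithin] with x hx
  rw [slope_def_field, h0, sub_zero]
  exact div_nonpos_of_nonneg_of_nonpos (hpos x hx).le (sub_nonpos.2 hx.2.le)

theorem IsPreconnected.forall_pos_or_forall_neg {X : Type*} [TopologicalSpace X] {s : Set X}
    {f : X → ℝ} (hs : IsPreconnected s) (hf : ContinuousOn f s) (hne : ∀ x ∈ s, f x ≠ 0) :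
    (∀ x ∈ s, 0 < f x) ∨ ∀ x ∈ s, f x < 0 := by
  by_contra! h
  obtain ⟨⟨x, hx, hfx⟩, y, hy, hfy⟩ := h
  obtain ⟨z, hz, hfz⟩ := hs.intermediate_value hx hy hf ⟨hfx, hfy⟩
  exact hne z hz hfz

theorem BC.wronskian_eq_zero {α : ℝ} {u u' v v' : ℝ → ℝ} (hu : BC α u u') (hv : BC α v v') :
    u' 0 * v 0 - u 0 * v' 0 = 0 ∧ u' π * v π - u π * v' π = 0 := by
  constructor
  · linear_combination (sin α * v 0 - cos α * v' 0) * hu.1 + (cos α * u' 0 - sin α * u 0) * hv.1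
      - (u' 0 * v 0 - u 0 * v' 0) * sin_sq_add_cos_sq α
  · linear_combination (sin α * v π - cos α * v' π) * hu.2 + (cos α * u' π - sin α * u π) * hv.2
      - (u' π * v π - u π * v' π) * sin_sq_add_cos_sq α

section Sturm

variable {Q₁ Q₂ U U' U'' V V' V'' : ℝ → ℝ} {a b : ℝ}

theorem sturm_comparison_of_pos (hU : IsC2AC U U' U'') (hV : IsC2AC V V' V'')
    (eqU : ∀ᵐ x ∂μI, U'' x = Q₁ x * U x) (eqV : ∀ᵐ x ∂μI, V'' x = Q₂ x * V x)
    (hQ : ∀ x ∈ Ioo a b, Q₂ x < Q₁ x) (ha : a ∈ Icc 0 π) (hb : b ∈ Icc 0 π) (hab : a < b)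
    (hWa : U a = 0 ∨ U' a * V a - U a * V' a = 0) (hWb : U b = 0 ∨ U' b * V b - U b * V' b = 0)
    (hUpos : ∀ x ∈ Ioo a b, 0 < U x) (hVpos : ∀ x ∈ Ioo a b, 0 < V x) : False := by
  have hIoo : Ioo a b ⊆ Icc 0 π := Ioo_subset_Icc_self.trans (Icc_subset_Icc ha.1 hb.2)
  have hint : 0 < ∫ x in a..b, (U'' x * V x - U x * V'' x) := by
    refine intervalIntegral.integral_pos_of_ae_pos hab
      (((hU.intervalIntegrable_deriv2 ha hb).mul_continuousOn
        (hV.continuousOn.mono (uIcc_subset_Icc ha hb))).sub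
      ((hV.intervalIntegrable_deriv2 ha hb).continuousOn_mul
        (hU.continuousOn.mono (uIcc_subset_Icc ha hb)))) ?_
    filter_upwards [(ae_restrict_iff' measurableSet_Ioo).1 eqU,
      (ae_restrict_iff' measurableSet_Ioo).1 eqV] with x hxU hxV hx
    have hx0 : x ∈ Ioo 0 π := ⟨ha.1.trans_lt hx.1, hx.2.trans_le hb.2⟩
    rw [hxU hx0, hxV hx0]
    have := mul_pos (sub_pos.2 (hQ x hx)) (mul_pos (hUpos x hx) (hVpos x hx))
    linarith
  have hWa' : 0 ≤ U' a * V a - U a * V' a := by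
    rcases hWa with h | h
    · have hU' : 0 ≤ U' a := (hU.hasDerivWithinAt ha).nonneg_of_pos_right hIoo hab h hUpos
      have hVa : 0 ≤ V a := ContinuousWithinAt.closure_le (by simp [closure_Ioo hab.ne, hab.le])
        continuousWithinAt_const ((hV.continuousOn a ha).mono hIoo) fun x hx => (hVpos x hx).le
      simpa [h] using mul_nonneg hU' hVa
    · exact h.ge
  have hWb' : U' b * V b - U b * V' b ≤ 0 := by
    rcases hWb with h | h
    · have hU' : U' b ≤ 0 := (hU.hasDerivWithinAt hb).nonpos_of_pos_left hIoo hab h hUpos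
      have hVb : 0 ≤ V b := ContinuousWithinAt.closure_le (by simp [closure_Ioo hab.ne, hab.le])
        continuousWithinAt_const ((hV.continuousOn b hb).mono hIoo) fun x hx => (hVpos x hx).le
      simpa [h] using mul_nonpos_of_nonpos_of_nonneg hU' hVb
    · exact h.le
  linarith [hU.wronskian_sub_eq_integral hV ha hb]

theorem sturm_comparison (hU : IsC2AC U U' U'') (hV : IsC2AC V V' V'')
    (eqU : ∀ᵐ x ∂μI, U'' x = Q₁ x * U x) (eqV : ∀ᵐ x ∂μI, V'' x = Q₂ x * V x)
    (hQ : ∀ x ∈ Ioo a b, Q₂ x < Q₁ x) (ha : a ∈ Icc 0 π) (hb : b ∈ Icc 0 π) (hab : a < b)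
    (hWa : U a = 0 ∨ U' a * V a - U a * V' a = 0) (hWb : U b = 0 ∨ U' b * V b - U b * V' b = 0)
    (hne : ∀ x ∈ Ioo a b, U x ≠ 0) : ∃ y ∈ Ioo a b, V y = 0 := by
  have hIoo : Ioo a b ⊆ Icc 0 π := Ioo_subset_Icc_self.trans (Icc_subset_Icc ha.1 hb.2)
  by_contra! hV0
  wlog hUpos : ∀ x ∈ Ioo a b, 0 < U x generalizing U U' U''
  · refine this hU.neg (eqU.mono fun x hx => by rw [hx]; ring)
      (hWa.imp neg_eq_zero.2 fun h => by linear_combination -h)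
      (hWb.imp neg_eq_zero.2 fun h => by linear_combination -h)
      (fun x hx => neg_ne_zero.2 (hne x hx)) ?_
    have hUneg := (isPreconnected_Ioo.forall_pos_or_forall_neg (hU.continuousOn.mono hIoo)
      hne).resolve_left hUpos
    exact fun x hx => neg_pos.2 (hUneg x hx)
  wlog hVpos : ∀ x ∈ Ioo a b, 0 < V x generalizing V V' V''
  · refine this hV.neg (eqV.mono fun x hx => by rw [hx]; ring)
      (fun x hx => neg_ne_zero.2 (hV0 x hx))
      (hWa.imp_right fun h => by linear_combination -h)
      (hWb.imp_right fun h => by linear_combination -h) ?_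
    have hVneg := (isPreconnected_Ioo.forall_pos_or_forall_neg (hV.continuousOn.mono hIoo)
      hV0).resolve_left hVpos
    exact fun x hx => neg_pos.2 (hVneg x hx)
  exact sturm_comparison_of_pos hU hV eqU eqV hQ ha hb hab hWa hWb hUpos hVpos

end Sturm

theorem Set.ncard_lt_ncard_inter_Ioo_of_forall_gap {s t : Set ℝ} (hs : s.Finite) (ht : t.Finite)
    {a b : ℝ} (hab : a < b) (hsab : s ⊆ Ioo a b)
    (hgap : ∀ x y, x < y → (x = a ∨ x ∈ s) → (y = b ∨ y ∈ s) → (∀ z ∈ Ioo x y, z ∉ s) →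
      (t ∩ Ioo x y).Nonempty) :
    s.ncard < (t ∩ Ioo a b).ncard := by
  obtain ⟨n, hn⟩ : ∃ n, s.ncard = n := ⟨_, rfl⟩
  induction n generalizing s b with
  | zero =>
    rw [hn, ncard_pos (ht.inter_of_left _)]
    refine hgap a b hab (Or.inl rfl) (Or.inl rfl) fun z _ hz => ?_
    rw [ncard_eq_zero hs] at hn
    rwa [hn] at hz
  | succ n ih =>
    obtain ⟨m, hm, hmax⟩ := exists_max_image s id hs (nonempty_of_ncard_ne_zero (by omega))
    have hm_le : ∀ y, (y = m ∨ y ∈ s \ {m}) → y ≤ m := fun y hy => hy.elim le_of_eq (hmax y ·.1)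
    have hn' : (s \ {m}).ncard = n := by rw [ncard_sdiff_singleton_of_mem hm, hn]; rfl
    have hlt := ih (s := s \ {m}) hs.sdiff (hsab hm).1
      (fun x hx => ⟨(hsab hx.1).1, lt_of_le_of_ne (hmax x hx.1) hx.2⟩)
      (fun x y hxy hx hy hgap' => hgap x y hxy (hx.imp_right (·.1))
        (Or.inr (hy.elim (· ▸ hm) (·.1)))
        fun z hz hzs => hgap' z hz ⟨hzs, (hz.2.trans_le (hm_le y hy)).ne⟩)
      hn'
    obtain ⟨w, hwt, hw⟩ := hgap m b (hsab hm).2 (Or.inr hm) (Or.inl rfl)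
      fun z hz hzs => (hmax z hzs).not_gt hz.1
    have hw_notMem : w ∉ t ∩ Ioo a m := fun h => h.2.2.not_gt hw.1
    have hsub : insert w (t ∩ Ioo a m) ⊆ t ∩ Ioo a b :=
      insert_subset ⟨hwt, (hsab hm).1.trans hw.1, hw.2⟩
        fun x hx => ⟨hx.1, hx.2.1, hx.2.2.trans (hsab hm).2⟩
    have := ncard_le_ncard hsub (ht.inter_of_left _)
    rw [ncard_insert_of_notMem hw_notMem (ht.inter_of_left _)] at this
    omega

theorem IsC2AC.ncard_zeroSet_lt {α : ℝ} {Q₁ Q₂ U U' U'' V V' V'' : ℝ → ℝ}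
    (hU : IsC2AC U U' U'') (hV : IsC2AC V V' V'')
    (eqU : ∀ᵐ x ∂μI, U'' x = Q₁ x * U x) (eqV : ∀ᵐ x ∂μI, V'' x = Q₂ x * V x)
    (hQ : ∀ x ∈ Ioo 0 π, U x ≠ 0 → Q₂ x < Q₁ x) (bcU : BC α U U') (bcV : BC α V V')
    (hUfin : (ZeroSet U).Finite) (hVfin : (ZeroSet V).Finite) :
    (ZeroSet U).ncard < (ZeroSet V).ncard := by
  have hW := bcU.wronskian_eq_zero bcV
  rw [← inter_eq_left.2 fun x (hx : x ∈ ZeroSet V) => hx.1]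
  refine Set.ncard_lt_ncard_inter_Ioo_of_forall_gap hUfin hVfin pi_pos (fun x hx => hx.1)
    fun x y hxy hx hy hgap => ?_
  have hx0 : x ∈ Icc 0 π := by
    rcases hx with rfl | hx
    exacts [left_mem_Icc.2 pi_nonneg, Ioo_subset_Icc_self hx.1]
  have hy0 : y ∈ Icc 0 π := by
    rcases hy with rfl | hy
    exacts [right_mem_Icc.2 pi_nonneg, Ioo_subset_Icc_self hy.1]
  have hsub : Ioo x y ⊆ Ioo 0 π := Ioo_subset_Ioo hx0.1 hy0.2
  have hUne : ∀ z ∈ Ioo x y, U z ≠ 0 := fun z hz hUz => hgap z hz ⟨hsub hz, hUz⟩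
  obtain ⟨z, hz, hVz⟩ := sturm_comparison hU hV eqU eqV
    (fun z hz => hQ z (hsub hz) (hUne z hz)) hx0 hy0 hxy
    (hx.elim (fun h => Or.inr (h ▸ hW.1)) fun h => Or.inl h.2)
    (hy.elim (fun h => Or.inr (h ▸ hW.2)) fun h => Or.inl h.2) hUne
  exact ⟨z, ⟨hsub hz, hVz⟩, hz⟩

theorem HasDerivWithinAt.eq_zero_of_accPt {f : ℝ → ℝ} {f' c : ℝ} {s : Set ℝ}
    (hf : HasDerivWithinAt f f' s c) (hc : AccPt c (𝓟 s)) (hs : ∀ x ∈ s, f x = 0) :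
    f c = 0 ∧ f' = 0 := by
  have hfc : f c = 0 := by
    rw [← mem_singleton_iff, ← closure_singleton]
    exact closure_mono (show f '' s ⊆ {0} from image_subset_iff.2 hs)
      (hf.continuousWithinAt.mem_closure_image hc.clusterPt.mem_closure)
  exact ⟨hfc, hc.uniqueDiffWithinAt.eq_deriv s hf ((hasDerivWithinAt_const c s 0).congr hs hfc)⟩

theorem eq_zero_on_uIcc_of_integral_lt_one {u u' u'' h : ℝ → ℝ} {c d : ℝ}
    (hu : ContinuousOn u (uIcc c d))
    (hu_int : ∀ y ∈ uIcc c d, ∫ t in c..y, u' t = u y)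
    (hu'_int : ∀ y ∈ uIcc c d, ∫ t in c..y, u'' t = u' y)
    (hh : IntervalIntegrable h volume c d) (hh0 : ∀ t, 0 ≤ h t)
    (hb : ∀ᵐ t, t ∈ uIoc c d → |u'' t| ≤ h t * |u t|)
    (hsmall : |d - c| * |∫ t in c..d, h t| < 1) :
    ∀ y ∈ uIcc c d, u y = 0 ∧ u' y = 0 := by
  obtain ⟨y₀, hy₀, hmax⟩ := isCompact_uIcc.exists_isMaxOn nonempty_uIcc hu.abs
  set M := |u y₀|
  set E := |∫ t in c..d, h t|
  have hu' : ∀ y ∈ uIcc c d, |u' y| ≤ M * E := by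
    intro y hy
    have hbound : ∀ᵐ t ∂volume.restrict (uIoc c y), ‖u'' t‖ ≤ h t * M := by
      rw [ae_restrict_iff' measurableSet_uIoc]
      filter_upwards [hb] with t ht hty
      have htd := uIoc_subset_uIoc_of_uIcc_subset_uIcc (uIcc_subset_uIcc_left hy) hty
      exact (ht htd).trans (mul_le_mul_of_nonneg_left (hmax (uIoc_subset_uIcc htd)) (hh0 t))
    rw [← hu'_int y hy]
    calc ‖∫ t in c..y, u'' t‖ ≤ |∫ t in c..y, h t * M| :=
          intervalIntegral.norm_integral_le_abs_of_norm_le hbound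
            ((hh.mono_set (uIcc_subset_uIcc_left hy)).mul_const M)
      _ = |∫ t in c..y, h t| * M := by
          rw [intervalIntegral.integral_mul_const, abs_mul, abs_abs]
      _ ≤ E * M := mul_le_mul_of_nonneg_right (intervalIntegral.abs_integral_mono_interval
          (uIoc_subset_uIoc_of_uIcc_subset_uIcc (uIcc_subset_uIcc_left hy))
          (Eventually.of_forall hh0) hh) (abs_nonneg _)
      _ = M * E := mul_comm _ _
  have hu_le : ∀ y ∈ uIcc c d, |u y| ≤ M * E * |d - c| := by
    intro y hy
    rw [← hu_int y hy]
    calc ‖∫ t in c..y, u' t‖ ≤ M * E * |y - c| :=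
          intervalIntegral.norm_integral_le_of_norm_le_const fun t ht =>
            hu' t (uIcc_subset_uIcc_left hy (uIoc_subset_uIcc ht))
      _ ≤ M * E * |d - c| :=
          mul_le_mul_of_nonneg_left (abs_sub_left_of_mem_uIcc hy) (by positivity)
  have hM : M = 0 := by
    have := hu_le y₀ hy₀
    have hM0 : 0 ≤ M := abs_nonneg _
    nlinarith [abs_nonneg (d - c)]
  intro y hy
  exact ⟨abs_nonpos_iff.1 (hM ▸ hmax hy), abs_nonpos_iff.1 (by simpa [hM] using hu' y hy)⟩

namespace IsC2AC

variable {u u' u'' Q : ℝ → ℝ}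

theorem eq_zero_of_deriv2_eq_mul (hu : IsC2AC u u' u'') (hQ : IntervalIntegrable Q volume 0 π)
    (hequ : ∀ᵐ x ∂μI, u'' x = Q x * u x) {c : ℝ} (hc : c ∈ Icc 0 π) (h0 : u c = 0)
    (h0' : u' c = 0) : ∀ x ∈ Icc 0 π, u x = 0 := by
  have hb : ∀ᵐ t, t ∈ Ioo 0 π → |u'' t| ≤ |Q t| * |u t| :=
    ((ae_restrict_iff' measurableSet_Ioo).1 hequ).mono fun t ht hmem => by rw [ht hmem, abs_mul]
  have hlocal : ∀ x ∈ Icc 0 π, ∀ y ∈ Icc 0 π, |y - x| * |(∫ t in x..y, |Q t|)| < 1 →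
      u x = 0 ∧ u' x = 0 → u y = 0 ∧ u' y = 0 := by
    rintro x hx y hy hsmall ⟨hux, hu'x⟩
    have hxy := uIcc_subset_Icc hx hy
    refine eq_zero_on_uIcc_of_integral_lt_one (hu.continuousOn.mono hxy)
      (fun z hz => by rw [hu.integral_deriv_eq_sub hx (hxy hz), hux, sub_zero])
      (fun z hz => by rw [hu.integral_deriv2_eq_sub hx (hxy hz), hu'x, sub_zero])
      (hQ.mono_set (uIcc_of_le pi_nonneg ▸ hxy)).abs (fun t => abs_nonneg _) ?_ hsmall y
      right_mem_uIcc
    filter_upwards [hb, ae_mem_Ioo_of_mem_Icc 0 π] with t ht hIoo htxy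
    exact ht (hIoo (hxy (uIoc_subset_uIcc htxy)))
  have hsmall : ∀ x ∈ Icc 0 π, ∀ᶠ y in 𝓝[Icc 0 π] x, |y - x| * |(∫ t in x..y, |Q t|)| < 1 := by
    intro x hx
    have hprim := intervalIntegral.continuousOn_primitive_interval' hQ.abs
      (uIcc_of_le pi_nonneg ▸ hx)
    rw [uIcc_of_le pi_nonneg] at hprim
    have hcont : ContinuousWithinAt (fun y => |y - x| * |(∫ t in x..y, |Q t|)|) (Icc 0 π) x :=
      (continuous_sub_right x).abs.continuousWithinAt.mul (hprim x hx).abs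
    exact hcont.eventually_lt_const (by simp)
  -- The local estimate is symmetric in `x` and `y`, so for `y` near `x` the Cauchy data vanish
  -- at `x` iff they vanish at `y`; connectedness of `[0, π]` carries this from `c` everywhere.
  intro x hx
  refine (isPreconnected_Icc.induction₂' (fun x y => u x = 0 ∧ u' x = 0 → u y = 0 ∧ u' y = 0)
    (fun x hx => ?_) (fun x y z _ _ _ hxy hyz => hyz ∘ hxy) hc hx ⟨h0, h0'⟩).1
  filter_upwards [hsmall x hx, self_mem_nhdsWithin] with y hy hyI
  refine ⟨hlocal x hx y hyI hy, hlocal y hyI x hx ?_⟩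
  rwa [abs_sub_comm, intervalIntegral.integral_symm, abs_neg]

theorem finite_zeroSet (hu : IsC2AC u u' u'') (hQ : IntervalIntegrable Q volume 0 π)
    (hequ : ∀ᵐ x ∂μI, u'' x = Q x * u x) (hnz : Nonzero u) : (ZeroSet u).Finite := by
  by_contra hinf
  have hsub : ZeroSet u ⊆ Icc 0 π := fun x hx => Ioo_subset_Icc_self hx.1
  obtain ⟨c, hc, hacc⟩ := Set.Infinite.exists_accPt_of_subset_isCompact hinf isCompact_Icc hsub
  obtain ⟨h0, h0'⟩ := ((hu.hasDerivWithinAt hc).mono hsub).eq_zero_of_accPt hacc fun x hx => hx.2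
  obtain ⟨x, hx, hux⟩ := hnz
  exact hux (hu.eq_zero_of_deriv2_eq_mul hQ hequ hc h0 h0' x hx)

end IsC2AC

theorem MemL2.intervalIntegrable {q : ℝ → ℝ} (hq : MemL2 q) : IntervalIntegrable q volume 0 π :=
  (intervalIntegrable_iff_integrableOn_Ioo_of_le pi_nonneg).2
    ((show MemLp q 2 (volume.restrict (Ioo 0 π)) from hq).integrable one_le_two)

theorem stmt4_general (q₀ : ℝ → ℝ) (hq₀ : MemL2 q₀) (α : ℝ) (k : ℕ)
    (μ : ℝ) (hμ : HasEigenK q₀ α μ k) :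
    ∀ lam : ℝ, lam ≤ μ →
      ¬ ∃ u u' u'', IsNPSol q₀ α lam (-1) u u' u'' ∧ Nonzero u ∧
        (¬ (ZeroSet u).Finite ∨ k - 1 ≤ (ZeroSet u).ncard) := by
  rintro lam hlam ⟨u, u', u'', ⟨hu, hequ, hbcu⟩, hnz, hzeros⟩
  obtain ⟨v, v', v'', ⟨hv, -, heqv, -, hbcv⟩, hvfin, hvcard⟩ := hμ
  have hequ' : ∀ᵐ x ∂μI, u'' x = (q₀ x - lam + u x ^ 2) * u x :=
    hequ.mono fun x hx => by linear_combination -hx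
  have heqv' : ∀ᵐ x ∂μI, v'' x = (q₀ x - μ) * v x :=
    heqv.mono fun x hx => by linear_combination -hx
  have hQ : IntervalIntegrable (fun x => q₀ x - lam + u x ^ 2) volume 0 π :=
    (hq₀.intervalIntegrable.sub intervalIntegrable_const).add
      ((hu.continuousOn.pow 2).intervalIntegrable_of_Icc pi_nonneg)
  have hufin := hu.finite_zeroSet hQ hequ' hnz
  have hlt := hu.ncard_zeroSet_lt hv hequ' heqv'
    (fun x _ hux => by linarith [sq_pos_of_ne_zero hux]) hbcu hbcv hufin hvfin
  have := hzeros.resolve_left (not_not.2 hufin)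
  omega

/-- If μ is the k-th eigenvalue of L[q₀], then for every lam ≤ μ the problem (NP_{-1})
has no nonzero solution with at least k-1 zeros in (0,π). -/
theorem stmt4 (q₀ : ℝ → ℝ) (hq₀ : MemL2 q₀) (α : ℝ) (k : ℕ) (hk : 1 ≤ k)
    (μ : ℝ) (hμ : HasEigenK q₀ α μ k) :
    ∀ lam : ℝ, lam ≤ μ →
      ¬ ∃ u u' u'', IsNPSol q₀ α lam (-1) u u' u'' ∧ Nonzero u ∧
        (¬ (ZeroSet u).Finite ∨ k - 1 ≤ (ZeroSet u).ncard) :=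
  stmt4_general q₀ hq₀ α k μ hμ
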